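/- arXiv:2503.14019 — 4 statements merged into one kernel-verified Lean document; each statement's English description precedes it below -/
import Mathlib

section
/- Let p and q be real numbers with 1 ≤ q ≤ p < ∞. For all a, b, c, d ∈ [0, ∞] (the extended nonnegative reals), one has (a +_q b) +_p (c +_q d) ≤ (a +_p c) +_q (b +_p d), where x +_r y denotes (x^r + y^r)^{1/r}. Consequently ([0,∞], ≤, +_p, +_q, 0) is a symmetric duoidal lattice. -/
open CategoryTheory

/-- A symmetric monoidal lattice `(L, ≤, ⊗, e)`: a complete lattice equipped with a
commutative monoid structure whose product is monotone in each argument and whose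
unit is the bottom element `e = ⊥`. -/
structure SML (L : Type) [CompleteLattice L] where
  mul : L → L → L
  mul_comm : ∀ a b, mul a b = mul b a
  mul_assoc : ∀ a b c, mul (mul a b) c = mul a (mul b c)
  mul_bot : ∀ a, mul a ⊥ = a
  mul_mono : ∀ ⦃a a' b b'⦄, a ≤ a' → b ≤ b' → mul a b ≤ mul a' b'

namespace SML

variable {L : Type} [CompleteLattice L]

lemma le_mul (M : SML L) (a b : L) : a ≤ M.mul a b := by
  have h := M.mul_mono (le_refl a) (bot_le (a := b))
  rwa [M.mul_bot] at h

/-- The `k`-fold product `t^{⊗k}`. -/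
def pow (M : SML L) (t : L) : ℕ → L
  | 0 => ⊥
  | k + 1 => M.mul t (M.pow t k)

/-- The left adjoint `λ_t(s) = inf {c : s ≤ t ⊗ c}` of `c ↦ t ⊗ c`. -/
def lam (M : SML L) (t s : L) : L := sInf {c : L | s ≤ M.mul t c}

/-- For every `t`, the map `c ↦ t ⊗ c` preserves arbitrary infima. -/
def InfPreserving (M : SML L) : Prop :=
  ∀ (t : L) (S : Set L), M.mul t (sInf S) = ⨅ c ∈ S, M.mul t c

/-- Product of a list of lattice elements. -/
def prodList (M : SML L) : List L → L
  | [] => ⊥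
  | a :: l => M.mul a (M.prodList l)

end SML

/-- A symmetric duoidal lattice `(L, ≤, ⊗, ⊕, e)`: two symmetric monoidal lattice
structures `tmul = ⊗` and `omul = ⊕` on the same complete lattice, with the same unit
`e = ⊥`, satisfying the generalized Minkowski inequality
`(s ⊕ t) ⊗ (s' ⊕ t') ≤ (s ⊗ s') ⊕ (t ⊗ t')`. -/
structure SDL (L : Type) [CompleteLattice L] where
  tmul : SML L
  omul : SML L
  duoidal : ∀ s t s' t' : L,
    tmul.mul (omul.mul s t) (omul.mul s' t') ≤ omul.mul (tmul.mul s s') (tmul.mul t t')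

/-- The directed graph distance `δ⃗_⊕(G, G') = sup_{v,v'} λ_{G(v,v')}(G'(v,v'))`. -/
noncomputable def dirDist {L : Type} [CompleteLattice L] (M : SML L) {V : Type}
    (G G' : V → V → L) : L :=
  ⨆ v : V, ⨆ v' : V, M.lam (G v v') (G' v v')

/-- The graph distance `δ_⊕(G, G') = sup {δ⃗_⊕(G, G'), δ⃗_⊕(G', G)}`. -/
noncomputable def graphDist {L : Type} [CompleteLattice L] (M : SML L) {V : Type}
    (G G' : V → V → L) : L :=
  dirDist M G G' ⊔ dirDist M G' G

open scoped ENNReal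

/-- The `r`-sum `a +_r b = (a^r + b^r)^{1/r}` on the extended nonnegative reals `[0, ∞]`,
using extended-real powers. -/
noncomputable def psum (r : ℝ) (a b : ℝ≥0∞) : ℝ≥0∞ := (a ^ r + b ^ r) ^ (1 / r)

/-! Write `p = q r` with `r = p / q ≥ 1`. Raising to the power `q` turns `+_q` into `+` and `+_p`
into `+_r` on the `q`-th powers, so the interchange inequality becomes Minkowski's inequality
`(x + y) +_r (z + w) ≤ (x +_r z) + (y +_r w)`. -/

namespace ENNReal

variable {r : ℝ}

lemma psum_comm (x y : ℝ≥0∞) : psum r x y = psum r y x := by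
  rw [psum, psum, add_comm]

lemma psum_rpow (hr : r ≠ 0) (x y : ℝ≥0∞) : psum r x y ^ r = x ^ r + y ^ r := by
  rw [psum, one_div, rpow_inv_rpow hr]

lemma psum_assoc (hr : r ≠ 0) (x y z : ℝ≥0∞) :
    psum r (psum r x y) z = psum r x (psum r y z) := by
  simp only [psum, one_div, rpow_inv_rpow hr, add_assoc]

lemma psum_zero_right (hr : 0 < r) (x : ℝ≥0∞) : psum r x 0 = x := by
  rw [psum, zero_rpow_of_pos hr, add_zero, one_div, rpow_rpow_inv hr.ne']

lemma psum_le_psum (hr : 0 ≤ r) {x x' y y' : ℝ≥0∞} (hx : x ≤ x') (hy : y ≤ y') :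
    psum r x y ≤ psum r x' y' := by
  unfold psum; gcongr

lemma psum_mul_rpow {q : ℝ} (hq : q ≠ 0) (hr : r ≠ 0) (x y : ℝ≥0∞) :
    psum (q * r) x y ^ q = psum r (x ^ q) (y ^ q) := by
  rw [psum, psum, ← rpow_mul, ← rpow_mul, ← rpow_mul]
  congr 1
  field_simp

lemma psum_add_add_le (hr : 1 ≤ r) (x y z w : ℝ≥0∞) :
    psum r (x + y) (z + w) ≤ psum r x z + psum r y w := by
  simpa [psum, Fin.sum_univ_two] using Lp_add_le Finset.univ ![x, z] ![y, w] hr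

theorem psum_psum_le_psum_psum {p q : ℝ} (hq : 0 < q) (hqp : q ≤ p) (a b c d : ℝ≥0∞) :
    psum p (psum q a b) (psum q c d) ≤ psum q (psum p a c) (psum p b d) := by
  obtain ⟨r, hr, rfl⟩ : ∃ r, 1 ≤ r ∧ p = q * r :=
    ⟨p / q, (one_le_div hq).2 hqp, by field_simp⟩
  have hr0 : r ≠ 0 := by positivity
  calc psum (q * r) (psum q a b) (psum q c d)
      = (psum (q * r) (psum q a b) (psum q c d) ^ q) ^ q⁻¹ := (rpow_rpow_inv hq.ne' _).symm
    _ = psum r (a ^ q + b ^ q) (c ^ q + d ^ q) ^ q⁻¹ := by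
      rw [psum_mul_rpow hq.ne' hr0, psum_rpow hq.ne', psum_rpow hq.ne']
    _ ≤ (psum r (a ^ q) (c ^ q) + psum r (b ^ q) (d ^ q)) ^ q⁻¹ := by
      gcongr
      exact psum_add_add_le hr _ _ _ _
    _ = psum q (psum (q * r) a c) (psum (q * r) b d) := by
      rw [← psum_mul_rpow hq.ne' hr0, ← psum_mul_rpow hq.ne' hr0, ← one_div]
      rfl

end ENNReal

noncomputable def psumSML (r : ℝ) (hr : 0 < r) : SML ℝ≥0∞ where
  mul := psum r
  mul_comm := ENNReal.psum_comm
  mul_assoc := ENNReal.psum_assoc hr.ne'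
  mul_bot := ENNReal.psum_zero_right hr
  mul_mono _ _ _ _ := ENNReal.psum_le_psum hr.le

/-- For real numbers `1 ≤ q ≤ p < ∞` and all `a, b, c, d ∈ [0, ∞]`,
`(a +_q b) +_p (c +_q d) ≤ (a +_p c) +_q (b +_p d)`; consequently
`([0,∞], ≤, +_p, +_q, 0)` is a symmetric duoidal lattice. -/
theorem psum_duoidal (p q : ℝ) (hq : 1 ≤ q) (hqp : q ≤ p) :
    (∀ a b c d : ℝ≥0∞, psum p (psum q a b) (psum q c d) ≤ psum q (psum p a c) (psum p b d)) ∧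
    (∃ D : SDL ℝ≥0∞, (∀ a b : ℝ≥0∞, D.tmul.mul a b = psum p a b) ∧
      ∀ a b : ℝ≥0∞, D.omul.mul a b = psum q a b) := by
  have hq0 : 0 < q := zero_lt_one.trans_le hq
  have interchange := ENNReal.psum_psum_le_psum_psum hq0 hqp
  exact ⟨interchange,
    ⟨psumSML p (hq0.trans_le hqp), psumSML q hq0, interchange⟩, fun _ _ => rfl, fun _ _ => rfl⟩
end

section
/- Let (L, ≤, ⊗, ⊕, e) be a symmetric duoidal lattice such that for every t ∈ L the map c ↦ t ⊕ c preserves arbitrary infima, and let G, G' : V × V → L be L-graphs on a finite set V. Then for every n ≥ 0 the monoidal Rips persistence modules H_n(R^•_⊗(G)) and H_n(R^•_⊗(G')) are (δ⃗_⊕(G, G')^{⊗(n+1)}, δ⃗_⊕(G', G)^{⊗(n+1)})-interleaved with respect to ⊕, the interleaving maps being induced by the inclusions of (n+1)-skeleta R^t_⊗(G) ⊆ R^{t ⊕ δ⃗_⊕(G,G')^{⊗(n+1)}}_⊗(G') and R^t_⊗(G') ⊆ R^{t ⊕ δ⃗_⊕(G',G)^{⊗(n+1)}}_⊗(G). -/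
open CategoryTheory

/-- The weight `𝓛^G_⊗(y)` of a tuple `y = (v₀, …, v_n)`: it is `G(v₀, v₀)` if all
entries are equal, and otherwise the `⊗`-product of `G(v_{i-1}, v_i)` over all `i`
with `v_{i-1} ≠ v_i`. -/
def weight {L : Type} [CompleteLattice L] (M : SML L) {V : Type} [DecidableEq V]
    (G : V → V → L) {n : ℕ} (y : Fin (n + 1) → V) : L :=
  if ∀ i, y i = y 0 then G (y 0) (y 0)
  else M.prodList (((List.finRange n).filter fun i => y i.castSucc ≠ y i.succ).map
    fun i => G (y i.castSucc) (y i.succ))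

/-- Membership of a tuple `y ∈ V^{n+1}` in the monoidal Rips complex `R^t_⊗(G)` in
dimension `n`: the weight of every face `α*y`, for `α : [m] → [n]` order-preserving,
is at most `t`. -/
def memRips {L : Type} [CompleteLattice L] (M : SML L) {V : Type} [DecidableEq V]
    (G : V → V → L) (t : L) {n : ℕ} (y : Fin (n + 1) → V) : Prop :=
  ∀ (m : ℕ) (α : Fin (m + 1) → Fin (n + 1)), Monotone α → weight M G (y ∘ α) ≤ t

/-- The monoidal Rips complex `R^t_⊗(G)` as a simplicial set (a simplicial subset of
the singular `V`-simplex `EV`). -/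
def RipsSSet {L : Type} [CompleteLattice L] (M : SML L) {V : Type} [DecidableEq V]
    (G : V → V → L) (t : L) : SSet.{0} where
  obj k := { y : Fin (k.unop.len + 1) → V // memRips M G t y }
  map {k k'} α := TypeCat.ofHom fun y => ⟨y.1 ∘ α.unop.toOrderHom, fun m β hβ =>
    y.2 m (α.unop.toOrderHom ∘ β) (α.unop.toOrderHom.monotone.comp hβ)⟩

/-- The monoidal Rips filtration `R^•_⊗(G)`, as a functor from the lattice `L`
(viewed as a category) to simplicial sets; the maps are the inclusions. -/
def ripsFunctor {L : Type} [CompleteLattice L] (M : SML L) {V : Type} [DecidableEq V]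
    (G : V → V → L) : L ⥤ SSet.{0} where
  obj t := RipsSSet M G t
  map {s t} h :=
    { app := fun k => TypeCat.ofHom fun y => ⟨y.1, fun m α hα => le_trans (y.2 m α hα) (leOfHom h)⟩ }

/-- The `n`-th homology with coefficients in a field `K` of a simplicial set, namely the
`n`-th homology of the alternating face map complex of the levelwise free `K`-vector
space on its simplices. -/
noncomputable def homFunctor (K : Type) [Field K] (n : ℕ) : SSet.{0} ⥤ ModuleCat.{0} K :=
  (SimplicialObject.whiskering (Type) (ModuleCat.{0} K)).obj (ModuleCat.free K) ⋙
    AlgebraicTopology.alternatingFaceMapComplex (ModuleCat.{0} K) ⋙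
    HomologicalComplex.homologyFunctor _ _ n

/-- The monoidal Rips persistence module `H_n(R^•_⊗(G))` with coefficients in `K`. -/
noncomputable def ripsPersistence (K : Type) [Field K] {L : Type} [CompleteLattice L]
    (M : SML L) {V : Type} [DecidableEq V] (G : V → V → L) (n : ℕ) : L ⥤ ModuleCat.{0} K :=
  ripsFunctor M G ⋙ homFunctor K n

/-- `H` and `H'` are `(δ, ε)`-interleaved with respect to the monoidal product of `M`:
there exist natural families `F_t : H_t → H'_{t ⊕ δ}` and `G_t : H'_t → H_{t ⊕ ε}`
whose composites are the corresponding structure maps. -/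
def Interleaved {L : Type} [CompleteLattice L] (M : SML L) {K : Type} [Field K]
    (H H' : L ⥤ ModuleCat.{0} K) (δ ε : L) : Prop :=
  ∃ (F : ∀ t : L, H.obj t ⟶ H'.obj (M.mul t δ)) (G : ∀ t : L, H'.obj t ⟶ H.obj (M.mul t ε)),
    (∀ (s t : L) (h : s ≤ t),
      H.map (homOfLE h) ≫ F t = F s ≫ H'.map (homOfLE (M.mul_mono h (le_refl δ)))) ∧
    (∀ (s t : L) (h : s ≤ t),
      H'.map (homOfLE h) ≫ G t = G s ≫ H.map (homOfLE (M.mul_mono h (le_refl ε)))) ∧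
    (∀ t : L, F t ≫ G (M.mul t δ) = H.map (homOfLE ((M.le_mul t δ).trans (M.le_mul _ ε)))) ∧
    (∀ t : L, G t ≫ F (M.mul t ε) = H'.map (homOfLE ((M.le_mul t ε).trans (M.le_mul _ δ))))

/-! Write `δ = δ⃗_⊕(G, G')`. Each edge weight satisfies `G'(v, v') ≤ G(v, v') ⊕ δ`, so by the
duoidal inequality the `⊗`-weight of a path with at most `N` nondegenerate edges grows from `w`
to at most `w ⊕ δ^{⊗N}`. Every face of a simplex of dimension `≤ n + 1` has at most `n + 1`
nondegenerate edges, hence the `(n + 1)`-skeleton of `R^t_⊗(G)` lies in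
`R^{t ⊕ δ^{⊗(n+1)}}_⊗(G')`. Since `H_n` only sees chains in degrees `n - 1`, `n`, `n + 1`, these
skeletal inclusions induce maps on `H_n`, and being inclusions they compose with each other and
with the structure maps as an interleaving requires. -/

namespace SML

variable {L : Type} [CompleteLattice L] (M : SML L)

lemma le_mul_lam (hinf : M.InfPreserving) (t s : L) : s ≤ M.mul t (M.lam t s) := by
  rw [SML.lam, hinf t _]
  exact le_iInf₂ fun _ hc => hc

lemma pow_mono (t : L) : Monotone (M.pow t) :=
  monotone_nat_of_le_succ fun k => (M.le_mul (M.pow t k) t).trans_eq (M.mul_comm _ _)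

lemma le_pow (t : L) {N : ℕ} (hN : 1 ≤ N) : t ≤ M.pow t N :=
  (M.mul_bot t).symm.trans_le (M.pow_mono t hN)

lemma prodList_map_mono {ι : Type} {f g : ι → L} :
    ∀ {l : List ι}, (∀ i ∈ l, f i ≤ g i) → M.prodList (l.map f) ≤ M.prodList (l.map g)
  | [], _ => le_rfl
  | _ :: _, h => M.mul_mono (h _ List.mem_cons_self)
      (prodList_map_mono fun i hi => h i (List.mem_cons_of_mem _ hi))

end SML

lemma SDL.prodList_map_omul_le {L : Type} [CompleteLattice L] (D : SDL L) {ι : Type}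
    (f : ι → L) (d : L) : ∀ l : List ι,
      D.tmul.prodList (l.map fun i => D.omul.mul (f i) d) ≤
        D.omul.mul (D.tmul.prodList (l.map f)) (D.tmul.pow d l.length)
  | [] => bot_le
  | i :: l => (D.tmul.mul_mono le_rfl (D.prodList_map_omul_le f d l)).trans
      (D.duoidal (f i) d _ _)

lemma le_omul_dirDist {L : Type} [CompleteLattice L] {M : SML L} (hinf : M.InfPreserving)
    {V : Type} (G G' : V → V → L) (v v' : V) : G' v v' ≤ M.mul (G v v') (dirDist M G G') :=
  (M.le_mul_lam hinf _ _).trans (M.mul_mono le_rfl (le_iSup₂_of_le v v' le_rfl))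

open Finset in
lemma card_filter_castSucc_ne_succ_le {k m : ℕ} {β : Fin (k + 1) → Fin (m + 1)}
    (hβ : Monotone β) : #{i : Fin k | β i.castSucc ≠ β i.succ} ≤ m := by
  set S := ({i : Fin k | β i.castSucc ≠ β i.succ} : Finset (Fin k))
  have hstep : ∀ i ∈ S, β i.castSucc < β i.succ := fun i hi =>
    (hβ (Fin.castSucc_le_succ i)).lt_of_ne (mem_filter.1 hi).2
  have hstrict : StrictMonoOn (fun i : Fin k => β i.succ) S := fun i _ j hj hij =>
    (hβ (Fin.succ_le_castSucc_iff.2 hij)).trans_lt (hstep j hj)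
  calc #S ≤ #(univ.erase (0 : Fin (m + 1))) :=
        card_le_card_of_injOn _ (fun i hi => mem_erase.2
          ⟨((Fin.zero_le _).trans_lt (hstep i hi)).ne', mem_univ _⟩) hstrict.injOn
    _ = m := by simp

section RipsComplex

variable {L : Type} [CompleteLattice L] {V : Type} [DecidableEq V]

lemma length_filter_comp_ne_le {k m : ℕ} (y : Fin (m + 1) → V) {β : Fin (k + 1) → Fin (m + 1)}
    (hβ : Monotone β) :
    ((List.finRange k).filter fun i => (y ∘ β) i.castSucc ≠ (y ∘ β) i.succ).length ≤ m :=
  calc _ ≤ ((List.finRange k).filter fun i => β i.castSucc ≠ β i.succ).length :=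
        (List.monotone_filter_right _ fun _ => by simpa using mt (congrArg y)).length_le
    _ ≤ m := card_filter_castSucc_ne_succ_le hβ

lemma weight_le_omul_pow_dirDist (D : SDL L) (hinf : D.omul.InfPreserving) (G G' : V → V → L)
    {m N : ℕ} (z : Fin (m + 1) → V)
    (hz : ((List.finRange m).filter fun i => z i.castSucc ≠ z i.succ).length ≤ N + 1) :
    weight D.tmul G' z ≤
      D.omul.mul (weight D.tmul G z) (D.tmul.pow (dirDist D.omul G G') (N + 1)) := by
  unfold weight
  split_ifs
  · exact (le_omul_dirDist hinf G G' _ _).trans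
      (D.omul.mul_mono le_rfl (D.tmul.le_pow _ N.succ_pos))
  · calc _ ≤ D.tmul.prodList (((List.finRange m).filter fun i => z i.castSucc ≠ z i.succ).map
          fun i => D.omul.mul (G (z i.castSucc) (z i.succ)) (dirDist D.omul G G')) :=
          D.tmul.prodList_map_mono fun _ _ => le_omul_dirDist hinf G G' _ _
      _ ≤ _ := D.prodList_map_omul_le _ _ _
      _ ≤ _ := D.omul.mul_mono le_rfl (D.tmul.pow_mono _ hz)

lemma memRips_omul_pow_dirDist (D : SDL L) (hinf : D.omul.InfPreserving) (G G' : V → V → L)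
    {t : L} {n m : ℕ} (hm : m ≤ n + 1) {y : Fin (m + 1) → V} (hy : memRips D.tmul G t y) :
    memRips D.tmul G' (D.omul.mul t (D.tmul.pow (dirDist D.omul G G') (n + 1))) y :=
  fun _ β hβ => (weight_le_omul_pow_dirDist D hinf G G' (y ∘ β)
    ((length_filter_comp_ne_le y hβ).trans hm)).trans (D.omul.mul_mono (hy _ β hβ) le_rfl)

end RipsComplex

lemma ChainComplex.next_nat_le (n : ℕ) : (ComplexShape.down ℕ).next n ≤ n := by
  cases n <;> simp [ChainComplex.next_nat_zero, ChainComplex.next_nat_succ]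

section RipsHomology

open AlgebraicTopology

variable (K : Type) [Field K] {L : Type} [CompleteLattice L] (M : SML L) {V : Type}
  [DecidableEq V]

def RipsSkeletonLE (G₁ : V → V → L) (t₁ : L) (G₂ : V → V → L) (t₂ : L) (k : ℕ) : Prop :=
  ∀ m ≤ k, ∀ y : Fin (m + 1) → V, memRips M G₁ t₁ y → memRips M G₂ t₂ y

noncomputable abbrev ripsChains (G : V → V → L) (t : L) : ChainComplex (ModuleCat.{0} K) ℕ :=
  AlternatingFaceMapComplex.obj
    (((SimplicialObject.whiskering Type (ModuleCat.{0} K)).obj (ModuleCat.free K)).obj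
      (RipsSSet M G t))

variable {K M} {G₁ G₂ G₃ : V → V → L} {t₁ t₂ t₃ : L}

noncomputable def ripsChainsInclusion {m : ℕ}
    (h : ∀ y : Fin (m + 1) → V, memRips M G₁ t₁ y → memRips M G₂ t₂ y) :
    (ripsChains K M G₁ t₁).X m ⟶ (ripsChains K M G₂ t₂).X m :=
  (ModuleCat.free K).map (TypeCat.ofHom fun y => ⟨y.1, h y.1 y.2⟩)

lemma ripsChainsInclusion_comp {m : ℕ}
    (h₁ : ∀ y : Fin (m + 1) → V, memRips M G₁ t₁ y → memRips M G₂ t₂ y)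
    (h₂ : ∀ y : Fin (m + 1) → V, memRips M G₂ t₂ y → memRips M G₃ t₃ y) :
    ripsChainsInclusion (K := K) h₁ ≫ ripsChainsInclusion h₂ =
      ripsChainsInclusion fun y hy => h₂ y (h₁ y hy) :=
  ((ModuleCat.free K).map_comp _ _).symm

lemma ripsChains_d_comp_inclusion {i j : ℕ}
    (hi : ∀ y : Fin (i + 1) → V, memRips M G₁ t₁ y → memRips M G₂ t₂ y)
    (hj : ∀ y : Fin (j + 1) → V, memRips M G₁ t₁ y → memRips M G₂ t₂ y) :
    (ripsChains K M G₁ t₁).d i j ≫ ripsChainsInclusion hj =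
      ripsChainsInclusion hi ≫ (ripsChains K M G₂ t₂).d i j := by
  by_cases hij : j + 1 = i
  · subst hij
    simp only [AlternatingFaceMapComplex.obj_d_eq, Preadditive.sum_comp, Preadditive.comp_sum,
      Preadditive.zsmul_comp, Preadditive.comp_zsmul]
    refine Finset.sum_congr rfl fun k _ => congrArg _ ?_
    -- both composites restrict the same face map of `EV`
    show (ModuleCat.free K).map _ ≫ (ModuleCat.free K).map _ =
      (ModuleCat.free K).map _ ≫ (ModuleCat.free K).map _
    rw [← Functor.map_comp, ← Functor.map_comp]
    rfl
  · rw [(ripsChains K M G₁ t₁).shape i j hij, (ripsChains K M G₂ t₂).shape i j hij,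
      Limits.zero_comp, Limits.comp_zero]

namespace RipsSkeletonLE

variable (K) {n : ℕ}

lemma of_le (G : V → V → L) {s t : L} (hst : s ≤ t) (k : ℕ) : RipsSkeletonLE M G s G t k :=
  fun _ _ _ hy l α hα => (hy l α hα).trans hst

lemma trans {k : ℕ} (h₁ : RipsSkeletonLE M G₁ t₁ G₂ t₂ k) (h₂ : RipsSkeletonLE M G₂ t₂ G₃ t₃ k) :
    RipsSkeletonLE M G₁ t₁ G₃ t₃ k :=
  fun m hm y hy => h₂ m hm y (h₁ m hm y hy)

noncomputable def scMap (h : RipsSkeletonLE M G₁ t₁ G₂ t₂ (n + 1)) :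
    (ripsChains K M G₁ t₁).sc n ⟶ (ripsChains K M G₂ t₂).sc n where
  τ₁ := ripsChainsInclusion (h _ (ChainComplex.prev ℕ n).le)
  τ₂ := ripsChainsInclusion (h n n.le_succ)
  τ₃ := ripsChainsInclusion (h _ ((ChainComplex.next_nat_le n).trans n.le_succ))
  comm₁₂ := (ripsChains_d_comp_inclusion _ _).symm
  comm₂₃ := (ripsChains_d_comp_inclusion _ _).symm

noncomputable def homologyMap (h : RipsSkeletonLE M G₁ t₁ G₂ t₂ (n + 1)) :
    (ripsPersistence K M G₁ n).obj t₁ ⟶ (ripsPersistence K M G₂ n).obj t₂ :=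
  ShortComplex.homologyMap (h.scMap K)

lemma scMap_comp (h₁ : RipsSkeletonLE M G₁ t₁ G₂ t₂ (n + 1))
    (h₂ : RipsSkeletonLE M G₂ t₂ G₃ t₃ (n + 1)) :
    h₁.scMap K ≫ h₂.scMap K = (h₁.trans h₂).scMap K := by
  ext : 1 <;>
    simp only [ShortComplex.comp_τ₁, ShortComplex.comp_τ₂, ShortComplex.comp_τ₃, scMap] <;>
    exact ripsChainsInclusion_comp _ _

lemma homologyMap_comp (h₁ : RipsSkeletonLE M G₁ t₁ G₂ t₂ (n + 1))
    (h₂ : RipsSkeletonLE M G₂ t₂ G₃ t₃ (n + 1)) :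
    h₁.homologyMap K ≫ h₂.homologyMap K = (h₁.trans h₂).homologyMap K := by
  show ShortComplex.homologyMap (h₁.scMap K) ≫ ShortComplex.homologyMap (h₂.scMap K) =
    ShortComplex.homologyMap ((h₁.trans h₂).scMap K)
  rw [← ShortComplex.homologyMap_comp, scMap_comp]

end RipsSkeletonLE

variable (K)

lemma ripsPersistence_map_homOfLE (G : V → V → L) {s t : L} (hst : s ≤ t) (n : ℕ) :
    (ripsPersistence K M G n).map (homOfLE hst) =
      (RipsSkeletonLE.of_le G hst (n + 1)).homologyMap K :=
  rfl

theorem interleaved_ripsPersistence_of_skeletonLE (O : SML L) {G G' : V → V → L} {n : ℕ}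
    {δ ε : L} (hδ : ∀ t, RipsSkeletonLE M G t G' (O.mul t δ) (n + 1))
    (hε : ∀ t, RipsSkeletonLE M G' t G (O.mul t ε) (n + 1)) :
    Interleaved O (ripsPersistence K M G n) (ripsPersistence K M G' n) δ ε := by
  refine ⟨fun t => (hδ t).homologyMap K, fun t => (hε t).homologyMap K, ?_, ?_, ?_, ?_⟩ <;>
    intros <;>
    simp only [ripsPersistence_map_homOfLE, RipsSkeletonLE.homologyMap_comp]

end RipsHomology

theorem directed_graph_distance_stability_general {L : Type} [CompleteLattice L] (D : SDL L)
    (hinf : D.omul.InfPreserving) {V : Type} [DecidableEq V]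
    (G G' : V → V → L) (K : Type) [Field K] (n : ℕ) :
    Interleaved D.omul (ripsPersistence K D.tmul G n) (ripsPersistence K D.tmul G' n)
      (D.tmul.pow (dirDist D.omul G G') (n + 1))
      (D.tmul.pow (dirDist D.omul G' G) (n + 1)) :=
  interleaved_ripsPersistence_of_skeletonLE K D.omul
    (fun _ _ hm _ => memRips_omul_pow_dirDist D hinf G G' hm)
    (fun _ _ hm _ => memRips_omul_pow_dirDist D hinf G' G hm)

/-- Let `(L, ≤, ⊗, ⊕, e)` be a symmetric duoidal lattice such that every
map `c ↦ t ⊕ c` preserves arbitrary infima, and let `G, G'` be `L`-graphs on a finite set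
`V`. Then for every `n ≥ 0`, the monoidal Rips persistence modules `H_n(R^•_⊗(G))` and
`H_n(R^•_⊗(G'))` are `(δ⃗_⊕(G, G')^{⊗(n+1)}, δ⃗_⊕(G', G)^{⊗(n+1)})`-interleaved with
respect to `⊕`. -/
theorem directed_graph_distance_stability {L : Type} [CompleteLattice L] (D : SDL L)
    (hinf : D.omul.InfPreserving) {V : Type} [Fintype V] [DecidableEq V]
    (G G' : V → V → L) (K : Type) [Field K] (n : ℕ) :
    Interleaved D.omul (ripsPersistence K D.tmul G n) (ripsPersistence K D.tmul G' n)
      (D.tmul.pow (dirDist D.omul G G') (n + 1))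
      (D.tmul.pow (dirDist D.omul G' G) (n + 1)) :=
  directed_graph_distance_stability_general D hinf G G' K n
end

section
/- Let (L, ≤, ⊗, ⊕, e) be a symmetric duoidal lattice such that for every t ∈ L the map c ↦ t ⊕ c preserves arbitrary infima, and let G, G' : V × V → L be L-graphs on a finite set V. Then for every n ≥ 0 the monoidal Rips persistence modules H_n(R^•_⊗(G)) and H_n(R^•_⊗(G')) are δ_⊕(G, G')^{⊗(n+1)}-interleaved with respect to ⊕. -/
open CategoryTheory

/-!
Homology in degree `n` only sees simplices of dimension at most `n + 1`, and every such simplex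
has at most `n + 1` jumps (indices with `v_{i-1} ≠ v_i`); jumps can only decrease under face
and degeneracy maps. Since `c ↦ t ⊕ c` preserves infima, every edge satisfies
`G' v w ≤ G v w ⊕ δ` for `δ = δ_⊕(G, G')`, and the duoidal inequality turns this into
`𝓛^{G'}_⊗(y) ≤ 𝓛^G_⊗(y) ⊕ δ^{⊗(n+1)}` for every `y` with at most `n + 1` jumps. Hence the
simplicial subset of `R^t_⊗(G)` of simplices with at most `n + 1` jumps, whose inclusion induces
an isomorphism on `H_n`, maps into `R^{t ⊕ δ^{⊗(n+1)}}_⊗(G')`; composing the inverse of that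
isomorphism with the induced map gives the interleaving.
-/

namespace CategoryTheory.Functor

variable {C D : Type*} [Category C] [Category D] (F : C ⥤ D)

lemma map_comp_inv_map_comp_map {A B X Y X' Y' : C} (i : A ⟶ X) (j : B ⟶ Y)
    [IsIso (F.map i)] [IsIso (F.map j)] {f : X ⟶ Y} {g : A ⟶ B} {c : A ⟶ X'} {d : B ⟶ Y'}
    {f' : X' ⟶ Y'} (hi : i ≫ f = g ≫ j) (hc : c ≫ f' = g ≫ d) :
    F.map f ≫ CategoryTheory.inv (F.map j) ≫ F.map d =
      (CategoryTheory.inv (F.map i) ≫ F.map c) ≫ F.map f' := by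
  rw [← cancel_epi (F.map i), ← F.map_comp_assoc, hi, F.map_comp_assoc, IsIso.hom_inv_id_assoc,
    Category.assoc, IsIso.hom_inv_id_assoc, ← F.map_comp, ← F.map_comp, hc]

lemma inv_map_comp_map_comp_inv_map_comp_map {A X A' X' Y : C} (i : A ⟶ X) (i' : A' ⟶ X')
    [IsIso (F.map i)] [IsIso (F.map i')] {k : A ⟶ A'} {c' : A' ⟶ Y} {f : X ⟶ Y}
    (hk : k ≫ c' = i ≫ f) :
    (CategoryTheory.inv (F.map i) ≫ F.map (k ≫ i')) ≫
      CategoryTheory.inv (F.map i') ≫ F.map c' = F.map f := by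
  rw [F.map_comp, Category.assoc, Category.assoc, IsIso.hom_inv_id_assoc, ← F.map_comp, hk,
    F.map_comp, IsIso.inv_hom_id_assoc]

end CategoryTheory.Functor

namespace SML

variable {L : Type} [CompleteLattice L] (M : SML L)

lemma pow_one (t : L) : M.pow t 1 = t := M.mul_bot t

end SML

namespace SDL

variable {L : Type} [CompleteLattice L] (D : SDL L)

lemma prodList_le_omul_pow (δ : L) {l l' : List L}
    (h : List.Forall₂ (fun a b => b ≤ D.omul.mul a δ) l l') :
    D.tmul.prodList l' ≤ D.omul.mul (D.tmul.prodList l) (D.tmul.pow δ l.length) := by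
  induction h with
  | nil => exact bot_le
  | @cons a b l₁ l₂ hab _ ih =>
    exact (D.tmul.mul_mono hab ih).trans
      (D.duoidal a δ (D.tmul.prodList l₁) (D.tmul.pow δ l₁.length))

end SDL

lemma le_mul_graphDist {L : Type} [CompleteLattice L] {M : SML L}
    (hinf : M.InfPreserving) {V : Type} (G G' : V → V → L) (v w : V) :
    G' v w ≤ M.mul (G v w) (graphDist M G G') :=
  (M.le_mul_lam hinf _ _).trans <| M.mul_mono le_rfl <|
    le_sup_of_le_left <| le_iSup_of_le v <| le_iSup_of_le w le_rfl

lemma graphDist_comm {L : Type} [CompleteLattice L] (M : SML L) {V : Type}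
    (G G' : V → V → L) : graphDist M G G' = graphDist M G' G :=
  sup_comm _ _

section Jumps

variable {V : Type} [DecidableEq V]

def natJumps (f : ℕ → V) (a b : ℕ) : ℕ :=
  ∑ j ∈ Finset.Ico a b, if f j = f (j + 1) then 0 else 1

lemma natJumps_succ (f : ℕ → V) {a b : ℕ} (h : a ≤ b) :
    natJumps f a (b + 1) = natJumps f a b + if f b = f (b + 1) then 0 else 1 :=
  Finset.sum_Ico_succ_top h _

lemma natJumps_add (f : ℕ → V) {a b c : ℕ} (hab : a ≤ b) (hbc : b ≤ c) :
    natJumps f a b + natJumps f b c = natJumps f a c :=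
  Finset.sum_Ico_consecutive _ hab hbc

lemma natJumps_mono (f : ℕ → V) {a b c d : ℕ} (hca : c ≤ a) (hbd : b ≤ d) :
    natJumps f a b ≤ natJumps f c d :=
  Finset.sum_le_sum_of_subset (Finset.Ico_subset_Ico hca hbd)

lemma one_le_natJumps_of_ne (f : ℕ → V) {a b : ℕ} (hab : a ≤ b) (hne : f a ≠ f b) :
    1 ≤ natJumps f a b := by
  induction b, hab using Nat.le_induction with
  | base => exact absurd rfl hne
  | succ b hab ih =>
    rw [natJumps_succ f hab]
    by_cases hb : f a = f b
    · rw [if_neg (hb ▸ hne)]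
      omega
    · exact (ih hb).trans (Nat.le_add_right _ _)

lemma natJumps_comp_le (f : ℕ → V) {g : ℕ → ℕ} (hg : Monotone g) {a b : ℕ} (hab : a ≤ b) :
    natJumps (f ∘ g) a b ≤ natJumps f (g a) (g b) := by
  induction b, hab using Nat.le_induction with
  | base => simp [natJumps]
  | succ b hab ih =>
    have step : (if f (g b) = f (g (b + 1)) then 0 else 1) ≤ natJumps f (g b) (g (b + 1)) := by
      split_ifs with h
      · exact Nat.zero_le _
      · exact one_le_natJumps_of_ne f (hg b.le_succ) h
    rw [natJumps_succ _ hab, ← natJumps_add f (hg hab) (hg b.le_succ)]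
    exact Nat.add_le_add ih step

def jumpCount {m : ℕ} (y : Fin (m + 1) → V) : ℕ :=
  (Finset.univ.filter fun i : Fin m => y i.castSucc ≠ y i.succ).card

lemma jumpCount_le {m : ℕ} (y : Fin (m + 1) → V) : jumpCount y ≤ m :=
  (Finset.card_filter_le _ _).trans_eq (Finset.card_fin m)

lemma jumpCount_eq_natJumps {m : ℕ} (y : Fin (m + 1) → V) :
    jumpCount y = natJumps (fun k => y (Fin.clamp k m)) 0 m := by
  rw [jumpCount, Finset.card_filter, natJumps, ← Finset.range_eq_Ico,
    ← Fin.sum_univ_eq_sum_range fun j => if y (Fin.clamp j m) = y (Fin.clamp (j + 1) m)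
      then 0 else 1]
  refine Finset.sum_congr rfl fun i _ => ?_
  have h1 : Fin.clamp i m = i.castSucc := Fin.ext (min_eq_left i.2.le)
  have h2 : Fin.clamp (i + 1) m = i.succ := Fin.ext (min_eq_left i.2)
  simp [h1, h2, ite_not]

lemma jumpCount_comp_le {m q : ℕ} (y : Fin (q + 1) → V) {α : Fin (m + 1) → Fin (q + 1)}
    (hα : Monotone α) : jumpCount (y ∘ α) ≤ jumpCount y := by
  set g : ℕ → ℕ := fun k => α (Fin.clamp k m)
  have hg : Monotone g := fun a b h => hα (min_le_min_right m h)
  have hyg : (fun k => (y ∘ α) (Fin.clamp k m)) = (fun k => y (Fin.clamp k q)) ∘ g := by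
    funext k
    simp [g, Fin.clamp, min_eq_left (Nat.lt_succ_iff.1 (α _).2)]
  rw [jumpCount_eq_natJumps, jumpCount_eq_natJumps, hyg]
  exact (natJumps_comp_le _ hg (Nat.zero_le m)).trans
    (natJumps_mono _ (Nat.zero_le _) (Nat.lt_succ_iff.1 (α _).2))

end Jumps

section RipsComparison

variable {L : Type} [CompleteLattice L] {V : Type} [DecidableEq V]

lemma weight_le_omul_pow (D : SDL L) {G G' : V → V → L} {δ : L}
    (hG : ∀ v w, G' v w ≤ D.omul.mul (G v w) δ) {m N : ℕ} (y : Fin (m + 1) → V)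
    (hy : jumpCount y ≤ N + 1) :
    weight D.tmul G' y ≤ D.omul.mul (weight D.tmul G y) (D.tmul.pow δ (N + 1)) := by
  unfold weight
  split_ifs with hconst
  · refine (hG _ _).trans (D.omul.mul_mono le_rfl ?_)
    exact (D.tmul.pow_one δ).symm.trans_le (D.tmul.pow_mono δ (Nat.le_add_left 1 N))
  · refine (D.prodList_le_omul_pow δ ?_).trans (D.omul.mul_mono le_rfl (D.tmul.pow_mono δ ?_))
    · rw [List.forall₂_map_right_iff, List.forall₂_map_left_iff]
      exact List.forall₂_same.2 fun _ _ => hG _ _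
    · rw [List.length_map]
      exact hy

lemma memRips_omul_pow (D : SDL L) {G G' : V → V → L} {δ t : L}
    (hG : ∀ v w, G' v w ≤ D.omul.mul (G v w) δ) {m N : ℕ} {y : Fin (m + 1) → V}
    (hy : memRips D.tmul G t y) (hjump : jumpCount y ≤ N + 1) :
    memRips D.tmul G' (D.omul.mul t (D.tmul.pow δ (N + 1))) y := fun _ α hα =>
  (weight_le_omul_pow D hG _ ((jumpCount_comp_le y hα).trans hjump)).trans
    (D.omul.mul_mono (hy _ α hα) le_rfl)

end RipsComparison

lemma HomologicalComplex.isIso_homologyMap_of_isIso_f {C : Type*} [Category C]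
    [Limits.HasZeroMorphisms C] {ι : Type*} {c : ComplexShape ι} {X Y : HomologicalComplex C c}
    (φ : X ⟶ Y) (i : ι) [X.HasHomology i] [Y.HasHomology i] (h₁ : IsIso (φ.f (c.prev i)))
    (h₂ : IsIso (φ.f i)) (h₃ : IsIso (φ.f (c.next i))) : IsIso (homologyMap φ i) := by
  have : IsIso ((shortComplexFunctor C c i).map φ) :=
    @ShortComplex.isIso_of_isIso _ _ _ _ _ _ h₁ h₂ h₃
  exact ShortComplex.isIso_homologyMap_of_isIso _

lemma isIso_homFunctor_map (K : Type) [Field K] (n : ℕ) {X Y : SSet.{0}} (f : X ⟶ Y)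
    (hf : ∀ m ≤ n + 1, Function.Bijective (f.app (Opposite.op (SimplexCategory.mk m)))) :
    IsIso ((homFunctor K n).map f) := by
  have hchain : ∀ m ≤ n + 1, IsIso
      (((AlgebraicTopology.alternatingFaceMapComplex (ModuleCat.{0} K)).map
        (((SimplicialObject.whiskering _ _).obj (ModuleCat.free K)).map f)).f m) := fun m hm =>
    have : IsIso (f.app (Opposite.op (SimplexCategory.mk m))) :=
      (isIso_iff_bijective _).2 (hf m hm)
    Functor.map_isIso (ModuleCat.free K) _
  refine HomologicalComplex.isIso_homologyMap_of_isIso_f _ n ?_ (hchain n n.le_succ) ?_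
  · rw [ChainComplex.prev]
    exact hchain (n + 1) le_rfl
  · rcases n with _ | n
    · rw [ChainComplex.next_nat_zero]
      exact hchain 0 (Nat.zero_le _)
    · rw [ChainComplex.next_nat_succ]
      exact hchain n (by omega)

section Interleaving

variable {L : Type} [CompleteLattice L] {V : Type} [DecidableEq V]

def jumpRipsSSet (M : SML L) (G : V → V → L) (t : L) (N : ℕ) : SSet.{0} where
  obj k := { y : Fin (k.unop.len + 1) → V // memRips M G t y ∧ jumpCount y ≤ N }
  map {k k'} α := TypeCat.ofHom fun y => ⟨y.1 ∘ α.unop.toOrderHom, fun m β hβ =>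
    y.2.1 m (α.unop.toOrderHom ∘ β) (α.unop.toOrderHom.monotone.comp hβ),
    (jumpCount_comp_le y.1 α.unop.toOrderHom.monotone).trans y.2.2⟩

namespace jumpRipsSSet

variable {M : SML L} {G G' : V → V → L} {t t' : L} {N : ℕ}

def toRipsSSet
    (h : ∀ m (y : Fin (m + 1) → V), memRips M G t y → jumpCount y ≤ N → memRips M G' t' y) :
    jumpRipsSSet M G t N ⟶ RipsSSet M G' t' where
  app _ := TypeCat.ofHom fun y => ⟨y.1, h _ y.1 y.2.1 y.2.2⟩

def hom
    (h : ∀ m (y : Fin (m + 1) → V), memRips M G t y → jumpCount y ≤ N → memRips M G' t' y) :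
    jumpRipsSSet M G t N ⟶ jumpRipsSSet M G' t' N where
  app _ := TypeCat.ofHom fun y => ⟨y.1, h _ y.1 y.2.1 y.2.2, y.2.2⟩

variable (M G t N) in
def incl : jumpRipsSSet M G t N ⟶ RipsSSet M G t := toRipsSSet fun _ _ hy _ => hy

variable (M G t) in
lemma isIso_homFunctor_map_incl (K : Type) [Field K] (n : ℕ) :
    IsIso ((homFunctor K n).map (incl M G t (n + 1))) :=
  isIso_homFunctor_map K n _ fun _ hm =>
    ⟨fun _ _ hyz => Subtype.ext (congrArg Subtype.val hyz :),
      fun y => ⟨⟨y.1, y.2, (jumpCount_le y.1).trans hm⟩, rfl⟩⟩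

end jumpRipsSSet

open jumpRipsSSet

variable (D : SDL L) {G G' : V → V → L} {δ : L} (hG : ∀ v w, G' v w ≤ D.omul.mul (G v w) δ)
  (K : Type) [Field K] (n : ℕ)

noncomputable def interleavingMap (t : L) :
    (homFunctor K n).obj (RipsSSet D.tmul G t) ⟶
      (homFunctor K n).obj (RipsSSet D.tmul G' (D.omul.mul t (D.tmul.pow δ (n + 1)))) :=
  have := isIso_homFunctor_map_incl D.tmul G t K n
  inv ((homFunctor K n).map (incl D.tmul G t (n + 1))) ≫
    (homFunctor K n).map (toRipsSSet fun _ _ hy hjump => memRips_omul_pow D hG hy hjump)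

lemma interleavingMap_natural {s t : L} (hst : s ≤ t) :
    (ripsPersistence K D.tmul G n).map (homOfLE hst) ≫ interleavingMap D hG K n t =
      interleavingMap D hG K n s ≫ (ripsPersistence K D.tmul G' n).map
        (homOfLE (D.omul.mul_mono hst (le_refl (D.tmul.pow δ (n + 1))))) :=
  have := isIso_homFunctor_map_incl D.tmul G s K n
  have := isIso_homFunctor_map_incl D.tmul G t K n
  (homFunctor K n).map_comp_inv_map_comp_map
    (incl D.tmul G s (n + 1)) (incl D.tmul G t (n + 1))
    (g := hom fun _ _ hy _ p α hα => (hy p α hα).trans hst) rfl rfl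

lemma interleavingMap_comp_interleavingMap {δ' : L}
    (hG' : ∀ v w, G v w ≤ D.omul.mul (G' v w) δ') (t : L) :
    interleavingMap D hG K n t ≫
      interleavingMap D hG' K n (D.omul.mul t (D.tmul.pow δ (n + 1))) =
      (ripsPersistence K D.tmul G n).map (homOfLE ((D.omul.le_mul t _).trans
        (D.omul.le_mul _ (D.tmul.pow δ' (n + 1))))) :=
  have := isIso_homFunctor_map_incl D.tmul G t K n
  have := isIso_homFunctor_map_incl D.tmul G' (D.omul.mul t (D.tmul.pow δ (n + 1))) K n
  (homFunctor K n).inv_map_comp_map_comp_inv_map_comp_map (incl D.tmul G t (n + 1))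
    (incl D.tmul G' (D.omul.mul t (D.tmul.pow δ (n + 1))) (n + 1))
    (k := hom fun _ _ hy hjump => memRips_omul_pow D hG hy hjump) rfl

end Interleaving

theorem interleaved_of_le_omul {L : Type} [CompleteLattice L] (D : SDL L) {V : Type}
    [DecidableEq V] {G G' : V → V → L} {δ δ' : L} (hG : ∀ v w, G' v w ≤ D.omul.mul (G v w) δ)
    (hG' : ∀ v w, G v w ≤ D.omul.mul (G' v w) δ') (K : Type) [Field K] (n : ℕ) :
    Interleaved D.omul (ripsPersistence K D.tmul G n) (ripsPersistence K D.tmul G' n)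
      (D.tmul.pow δ (n + 1)) (D.tmul.pow δ' (n + 1)) :=
  ⟨interleavingMap D hG K n, interleavingMap D hG' K n,
    fun _ _ => interleavingMap_natural D hG K n, fun _ _ => interleavingMap_natural D hG' K n,
    interleavingMap_comp_interleavingMap D hG K n hG',
    interleavingMap_comp_interleavingMap D hG' K n hG⟩

theorem graph_distance_stability_general {L : Type} [CompleteLattice L] (D : SDL L)
    (hinf : D.omul.InfPreserving) {V : Type} [DecidableEq V]
    (G G' : V → V → L) (K : Type) [Field K] (n : ℕ) :
    Interleaved D.omul (ripsPersistence K D.tmul G n) (ripsPersistence K D.tmul G' n)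
      (D.tmul.pow (graphDist D.omul G G') (n + 1))
      (D.tmul.pow (graphDist D.omul G G') (n + 1)) := by
  refine interleaved_of_le_omul D (le_mul_graphDist hinf G G') ?_ K n
  rw [graphDist_comm]
  exact le_mul_graphDist hinf G' G

/-- Graph Distance Stability: Let `(L, ≤, ⊗, ⊕, e)` be a symmetric duoidal
lattice such that every map `c ↦ t ⊕ c` preserves arbitrary infima, and let `G, G'` be
`L`-graphs on a finite set `V`. Then for every `n ≥ 0`, the monoidal Rips persistence
modules `H_n(R^•_⊗(G))` and `H_n(R^•_⊗(G'))` are `δ_⊕(G, G')^{⊗(n+1)}`-interleaved with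
respect to `⊕`. -/
theorem graph_distance_stability {L : Type} [CompleteLattice L] (D : SDL L)
    (hinf : D.omul.InfPreserving) {V : Type} [Fintype V] [DecidableEq V]
    (G G' : V → V → L) (K : Type) [Field K] (n : ℕ) :
    Interleaved D.omul (ripsPersistence K D.tmul G n) (ripsPersistence K D.tmul G' n)
      (D.tmul.pow (graphDist D.omul G G') (n + 1))
      (D.tmul.pow (graphDist D.omul G G') (n + 1)) :=
  graph_distance_stability_general D hinf G G' K n
end

section
/- Let (V, d) be a finite extended metric space, let γ : V → [0, ∞] be a function, and consider the symmetric monoidal lattice ([0, ∞]² , ≤, ⊗, (0,0)) with the product order and ⊗ given by coordinatewise maximum. Define the graph G_γ : V × V → [0, ∞]² by G_γ(v, v') = (d(v, v'), γ(v)). Then for all t, s ∈ [0, ∞], every n ≥ 0, and every tuple y = (v₀, …, v_n) ∈ V^{n+1}: y ∈ R^{(t,s)}_⊗(G_γ)_n if and only if d(v_i, v_j) ≤ t and γ(v_i) ≤ s for all i, j ∈ {0, …, n}. Equivalently, R^{(t,s)}_⊗(G_γ) equals the simplicial set Sing(Rips^↑(γ)_{t,s}) of tuples whose underlying vertex set is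 a simplex of the sublevel Rips complex Rips(γ^{-1}[0, s])_t. -/
open CategoryTheory

open scoped ENNReal

/-- The symmetric monoidal lattice `([0,∞]², ≤, ⊗, (0,0))` with the product order and
`⊗` given by coordinatewise maximum (i.e., the lattice supremum of the product). -/
def supSML2 : SML (ℝ≥0∞ × ℝ≥0∞) where
  mul a b := a ⊔ b
  mul_comm a b := sup_comm a b
  mul_assoc a b c := sup_assoc a b c
  mul_bot a := sup_bot_eq a
  mul_mono := fun _ _ _ _ h h' => sup_le_sup h h'

/-! When `⊗` is a join, the weight of a face `α*y` is the join of the values of `G` on pairs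
`(y i, y j)` with `i ≤ j`, and each such pair is itself the weight of a vertex or an edge face.
So `R^t_⊗(G)` is cut out by the ordered pairs of entries; for `G_γ` the vertex faces bound `γ`,
and symmetry of `d` turns the bound on ordered pairs into one on all pairs. -/

section WeightLemmas

variable {L : Type} [CompleteLattice L] (M : SML L) {V : Type} [DecidableEq V] (G : V → V → L)

lemma SML.prodList_le_of_forall_le (hM : ∀ a b c : L, a ≤ c → b ≤ c → M.mul a b ≤ c)
    {l : List L} {c : L} (h : ∀ a ∈ l, a ≤ c) : M.prodList l ≤ c := by
  induction l with
  | nil => exact bot_le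
  | cons a l ih =>
      exact hM _ _ _ (h a List.mem_cons_self) (ih fun b hb => h b (List.mem_cons_of_mem a hb))

lemma weight_const {m : ℕ} (v : V) : weight M G (fun _ : Fin (m + 1) => v) = G v v :=
  if_pos fun _ => rfl

lemma weight_pair {v w : V} (hvw : v ≠ w) : weight M G ![v, w] = G v w := by
  have hnot : ¬ ∀ i, ![v, w] i = ![v, w] 0 := fun h => hvw (h 1).symm
  have hsteps : ((List.finRange 1).filter fun k : Fin 1 =>
      ![v, w] k.castSucc ≠ ![v, w] k.succ) = [0] := by
    simp [List.finRange_succ, hvw]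
  simp only [weight, if_neg hnot, hsteps, List.map_cons, List.map_nil, SML.prodList, M.mul_bot]
  rfl

variable {M G}

lemma le_of_memRips {t : L} {n : ℕ} {y : Fin (n + 1) → V} (hy : memRips M G t y)
    {i j : Fin (n + 1)} (hij : i ≤ j) : G (y i) (y j) ≤ t := by
  by_cases heq : y i = y j
  · have hvertex := hy 0 (fun _ => i) monotone_const
    rw [Function.comp_def, weight_const] at hvertex
    rwa [← heq]
  · have hmono : Monotone ![i, j] := by
      intro a b hab
      fin_cases a <;> fin_cases b <;> simp_all
    have hedge := hy 1 ![i, j] hmono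
    have hcomp : y ∘ ![i, j] = ![y i, y j] := by
      ext k; fin_cases k <;> rfl
    rwa [hcomp, weight_pair M G heq] at hedge

lemma weight_le_of_forall_le (hM : ∀ a b c : L, a ≤ c → b ≤ c → M.mul a b ≤ c)
    {t : L} {n : ℕ} {y : Fin (n + 1) → V} (hy : ∀ i j, i ≤ j → G (y i) (y j) ≤ t) :
    weight M G y ≤ t := by
  unfold weight
  split
  · exact hy 0 0 le_rfl
  · refine M.prodList_le_of_forall_le hM fun a ha => ?_
    obtain ⟨k, -, rfl⟩ := List.mem_map.mp ha
    exact hy _ _ k.castSucc_le_succ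

theorem memRips_iff_of_mul_le (hM : ∀ a b c : L, a ≤ c → b ≤ c → M.mul a b ≤ c) {t : L}
    {n : ℕ} {y : Fin (n + 1) → V} :
    memRips M G t y ↔ ∀ i j, i ≤ j → G (y i) (y j) ≤ t :=
  ⟨fun hy _ _ hij => le_of_memRips hy hij, fun hy _ _ hα =>
    weight_le_of_forall_le hM fun _ _ hij => hy _ _ (hα hij)⟩

end WeightLemmas

theorem sublevel_rips_bifiltration_general {V : Type} [DecidableEq V]
    (d : V → V → ℝ≥0∞)
    (hsymm : ∀ v v', d v v' = d v' v)
    (γ : V → ℝ≥0∞) (t s : ℝ≥0∞) (n : ℕ) (y : Fin (n + 1) → V) :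
    memRips supSML2 (fun v v' => (d v v', γ v)) (t, s) y ↔
      (∀ i j, d (y i) (y j) ≤ t) ∧ (∀ i, γ (y i) ≤ s) := by
  rw [memRips_iff_of_mul_le fun _ _ _ => sup_le]
  simp only [Prod.mk_le_mk]
  constructor
  · intro h
    refine ⟨fun i j => ?_, fun i => (h i i le_rfl).2⟩
    rcases le_total i j with hij | hji
    · exact (h i j hij).1
    · exact hsymm (y i) (y j) ▸ (h j i hji).1
  · rintro ⟨hd, hγ⟩ i j -
    exact ⟨hd i j, hγ i⟩

/-- Let `(V, d)` be a finite extended metric space, `γ : V → [0, ∞]` a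
function, and `G_γ(v, v') = (d(v, v'), γ(v))`, a graph valued in `[0, ∞]²` with the
product order and `⊗` = coordinatewise maximum. Then a tuple `y = (v₀, …, v_n)` is a
simplex of `R^{(t,s)}_⊗(G_γ)` if and only if `d(v_i, v_j) ≤ t` for all `i, j` and
`γ(v_i) ≤ s` for all `i`; that is, `R^{(t,s)}_⊗(G_γ)` is the simplicial set of tuples
whose underlying vertex set is a simplex of the sublevel Rips complex
`Rips(γ⁻¹[0, s])_t`. -/
theorem sublevel_rips_bifiltration {V : Type} [Fintype V] [DecidableEq V]
    (d : V → V → ℝ≥0∞)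
    (hsymm : ∀ v v', d v v' = d v' v)
    (htri : ∀ u v w, d u w ≤ d u v + d v w)
    (hzero : ∀ v v', d v v' = 0 ↔ v = v')
    (γ : V → ℝ≥0∞) (t s : ℝ≥0∞) (n : ℕ) (y : Fin (n + 1) → V) :
    memRips supSML2 (fun v v' => (d v v', γ v)) (t, s) y ↔
      (∀ i j, d (y i) (y j) ≤ t) ∧ (∀ i, γ (y i) ≤ s) :=
  sublevel_rips_bifiltration_general d hsymm γ t s n y
end
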